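/- Let v̂ ∈ ℝ^d be a unit vector, U a d×k matrix with orthonormal columns, A_n a d×d matrix with ‖A_n‖ ≤ 1, and γ_n > 0. Define Z_n = 2γ_n (v̂ᵀ U Uᵀ A_n v̂ − ‖Uᵀ v̂‖² v̂ᵀ A_n v̂) and Φ = 1 − ‖Uᵀ v̂‖². Then |Z_n| ≤ 2 γ_n √Φ. -/

import Mathlib

/-! With `P = U Uᵀ` and `t = ‖Uᵀ v̂‖² = v̂ᵀ P v̂`, the quantity `Z_n / 2γ_n` is
`(P v̂ - t v̂) ⬝ A_n v̂`, so by Cauchy–Schwarz and `‖A_n‖ ≤ 1` it is at most `‖P v̂ - t v̂‖`.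
Since `P` is an orthogonal projection and `‖v̂‖ = 1`, `‖P v̂ - t v̂‖² = t - t² ≤ 1 - t`. -/

open Matrix

/-- Euclidean norm of a vector in `ℝ^n`. -/
noncomputable def vecEnorm {n : ℕ} (v : Fin n → ℝ) : ℝ :=
  Real.sqrt (∑ i, v i ^ 2)

/-- Spectral norm of a real matrix. -/
noncomputable def spec {m n : ℕ} (M : Matrix (Fin m) (Fin n) ℝ) : ℝ :=
  ‖LinearMap.toContinuousLinearMap (Matrix.toEuclideanLin M)‖

lemma vecEnorm_eq_norm_toLp {n : ℕ} (v : Fin n → ℝ) : vecEnorm v = ‖WithLp.toLp 2 v‖ := by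
  simp [vecEnorm, EuclideanSpace.norm_eq]

lemma vecEnorm_nonneg {n : ℕ} (v : Fin n → ℝ) : 0 ≤ vecEnorm v :=
  Real.sqrt_nonneg _

lemma vecEnorm_sq {n : ℕ} (v : Fin n → ℝ) : vecEnorm v ^ 2 = v ⬝ᵥ v := by
  rw [vecEnorm, Real.sq_sqrt (by positivity)]
  simp [dotProduct, sq]

lemma abs_dotProduct_le_vecEnorm_mul {n : ℕ} (a b : Fin n → ℝ) :
    |a ⬝ᵥ b| ≤ vecEnorm a * vecEnorm b := by
  simpa [vecEnorm_eq_norm_toLp, PiLp.inner_apply, dotProduct, mul_comm] using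
    abs_real_inner_le_norm (WithLp.toLp 2 a) (WithLp.toLp 2 b)

lemma vecEnorm_mulVec_le {m n : ℕ} (M : Matrix (Fin m) (Fin n) ℝ) (v : Fin n → ℝ) :
    vecEnorm (M *ᵥ v) ≤ spec M * vecEnorm v := by
  simpa [vecEnorm_eq_norm_toLp, spec] using
    (LinearMap.toContinuousLinearMap (Matrix.toEuclideanLin M)).le_opNorm (WithLp.toLp 2 v)

lemma dotProduct_projection_mul_mulVec_sub {d k : ℕ} (U : Matrix (Fin d) (Fin k) ℝ)
    (A : Matrix (Fin d) (Fin d) ℝ) (v : Fin d → ℝ) (t : ℝ) :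
    v ⬝ᵥ (U * Uᵀ * A) *ᵥ v - t * (v ⬝ᵥ A *ᵥ v) = (U *ᵥ (Uᵀ *ᵥ v) - t • v) ⬝ᵥ A *ᵥ v := by
  rw [sub_dotProduct, smul_dotProduct, smul_eq_mul, ← mulVec_mulVec, ← mulVec_mulVec,
    dotProduct_mulVec, ← mulVec_transpose, dotProduct_mulVec, vecMul_transpose]

section Projection

variable {d k : ℕ} {U : Matrix (Fin d) (Fin k) ℝ}

lemma mulVec_dotProduct_mulVec_of_transpose_mul_eq_one (hU : Uᵀ * U = 1) (w : Fin k → ℝ) :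
    U *ᵥ w ⬝ᵥ U *ᵥ w = w ⬝ᵥ w := by
  rw [dotProduct_mulVec, ← mulVec_transpose, mulVec_mulVec, hU, one_mulVec]

lemma vecEnorm_sq_projection_sub_smul (hU : Uᵀ * U = 1) {v : Fin d → ℝ} (hv : v ⬝ᵥ v = 1) :
    vecEnorm (U *ᵥ (Uᵀ *ᵥ v) - vecEnorm (Uᵀ *ᵥ v) ^ 2 • v) ^ 2
      = vecEnorm (Uᵀ *ᵥ v) ^ 2 - (vecEnorm (Uᵀ *ᵥ v) ^ 2) ^ 2 := by
  have hcross : v ⬝ᵥ U *ᵥ (Uᵀ *ᵥ v) = vecEnorm (Uᵀ *ᵥ v) ^ 2 := by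
    rw [vecEnorm_sq, dotProduct_mulVec, ← mulVec_transpose]
  rw [vecEnorm_sq, sub_dotProduct, dotProduct_sub, dotProduct_sub, smul_dotProduct,
    smul_dotProduct, dotProduct_smul, dotProduct_smul,
    mulVec_dotProduct_mulVec_of_transpose_mul_eq_one hU,
    dotProduct_comm _ v, hcross, hv, ← vecEnorm_sq, smul_eq_mul, smul_eq_mul]
  ring

lemma abs_projection_sub_le (hU : Uᵀ * U = 1) (A : Matrix (Fin d) (Fin d) ℝ) {v : Fin d → ℝ}
    (hv : vecEnorm v = 1) (hA : spec A ≤ 1) :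
    |v ⬝ᵥ (U * Uᵀ * A) *ᵥ v - vecEnorm (Uᵀ *ᵥ v) ^ 2 * (v ⬝ᵥ A *ᵥ v)|
      ≤ Real.sqrt (1 - vecEnorm (Uᵀ *ᵥ v) ^ 2) := by
  set t := vecEnorm (Uᵀ *ᵥ v) ^ 2
  have hvv : v ⬝ᵥ v = 1 := by rw [← vecEnorm_sq, hv, one_pow]
  have hAv : vecEnorm (A *ᵥ v) ≤ 1 :=
    (vecEnorm_mulVec_le A v).trans (by rw [hv, mul_one]; exact hA)
  have hdefect : vecEnorm (U *ᵥ (Uᵀ *ᵥ v) - t • v) ≤ Real.sqrt (1 - t) := by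
    rw [← Real.sqrt_sq (vecEnorm_nonneg _), vecEnorm_sq_projection_sub_smul hU hvv]
    exact Real.sqrt_le_sqrt (by nlinarith [sq_nonneg (1 - t)])
  calc |v ⬝ᵥ (U * Uᵀ * A) *ᵥ v - t * (v ⬝ᵥ A *ᵥ v)|
      = |(U *ᵥ (Uᵀ *ᵥ v) - t • v) ⬝ᵥ A *ᵥ v| := by rw [dotProduct_projection_mul_mulVec_sub]
    _ ≤ vecEnorm (U *ᵥ (Uᵀ *ᵥ v) - t • v) * vecEnorm (A *ᵥ v) :=
        abs_dotProduct_le_vecEnorm_mul _ _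
    _ ≤ Real.sqrt (1 - t) * 1 := mul_le_mul hdefect hAv (vecEnorm_nonneg _) (Real.sqrt_nonneg _)
    _ = Real.sqrt (1 - t) := mul_one _

end Projection

/-- Bound on `|Z_n|` where
`Z_n = 2γ_n (v̂ᵀUUᵀA_n v̂ - ‖Uᵀv̂‖² v̂ᵀA_n v̂)` and `Φ = 1 - ‖Uᵀv̂‖²`. -/
theorem stmt_1 (d k : ℕ) (U : Matrix (Fin d) (Fin k) ℝ)
    (A : Matrix (Fin d) (Fin d) ℝ) (v : Fin d → ℝ) (γ : ℝ)
    (hU : Uᵀ * U = 1) (hv : vecEnorm v = 1) (hA : spec A ≤ 1) (hγ : 0 < γ) :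
    |2 * γ * (v ⬝ᵥ (U * Uᵀ * A).mulVec v
        - (vecEnorm (Uᵀ.mulVec v)) ^ 2 * (v ⬝ᵥ A.mulVec v))|
      ≤ 2 * γ * Real.sqrt (1 - (vecEnorm (Uᵀ.mulVec v)) ^ 2) := by
  rw [abs_mul, abs_of_pos (by positivity)]
  exact mul_le_mul_of_nonneg_left (abs_projection_sub_le hU A hv hA) (by positivity)
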